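/- Let T be a type of test cases, let d_1, ..., d_m be a finite list of datamorphisms on T with arities k_1, ..., k_m ≥ 1, let S : Set T, and let S_0 = S, S_j = S_{j-1} ∪ {d_j x | x : Fin k_j → T, ∀ l, x l ∈ S_{j-1}} for 1 ≤ j ≤ m be the stages of Algorithm 2. Then for every nonempty subset I ⊆ {1, ..., m} with maximal element j, there exists a combination term c over d_1, ..., d_m whose support is exactly I such that for every assignment v : ℕ → T with v n ∈ S for all n, the evaluation of c under v lies in S_j. (This is the induction invariant established in the proof of Theorem 2.) -/
import Mathlib


/-- Combination terms over a finite list of datamorphisms `d 0, …, d (m-1)`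
with arities `k 0, …, k (m-1)`: every variable (indexed by a natural number)
is a term, and applying a datamorphism to a tuple of terms is a term. -/
inductive Term {m : ℕ} (k : Fin m → ℕ) : Type
  | var : ℕ → Term k
  | app : (j : Fin m) → (Fin (k j) → Term k) → Term k

/-- Evaluation of a combination term under an assignment `v` of test cases to
variables: substitute `v n` for the variable indexed `n` and apply the
datamorphisms at the internal nodes. -/
def Term.eval {T : Type*} {m : ℕ} {k : Fin m → ℕ}
    (d : ∀ j : Fin m, (Fin (k j) → T) → T) (v : ℕ → T) : Term k → T
  | .var n => v n
  | .app j ts => d j (fun l => (ts l).eval d v)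

/-- The support of a combination term: the set of indices of datamorphisms
occurring in it. -/
def Term.support {m : ℕ} {k : Fin m → ℕ} : Term k → Finset (Fin m)
  | .var _ => ∅
  | .app j ts => insert j (Finset.univ.biUnion fun l => (ts l).support)

/-- The stages `S_0, S_1, …, S_m` of Algorithm 2: `S_0 = S` and `S_{j+1}` adds
to `S_j` all results of applying the `(j+1)`'st datamorphism `d j` to tuples of
elements of `S_j`.  (Stages beyond `m` are unchanged.) -/
def stage {T : Type*} {m : ℕ} {k : Fin m → ℕ}
    (d : ∀ j : Fin m, (Fin (k j) → T) → T) (S : Set T) : ℕ → Set T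
  | 0 => S
  | j + 1 =>
    if h : j < m then
      stage d S j ∪
        {y : T | ∃ x : Fin (k ⟨j, h⟩) → T, (∀ l, x l ∈ stage d S j) ∧ y = d ⟨j, h⟩ x}
    else stage d S j

lemma stage_mono {T : Type*} {m : ℕ} {k : Fin m → ℕ}
    (d : ∀ j : Fin m, (Fin (k j) → T) → T) (S : Set T) :
    ∀ {a b : ℕ}, a ≤ b → stage d S a ⊆ stage d S b := by
  intro a b hab
  induction b with
  | zero => have := Nat.le_zero.mp hab; subst this; exact subset_rfl
  | succ n ih =>
    rcases Nat.le_succ_iff_eq_or_le.mp hab with h | h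
    · subst h; exact subset_rfl
    · refine (ih h).trans ?_
      intro x hx
      by_cases hm : n < m
      · rw [stage, dif_pos hm]; exact Or.inl hx
      · rw [stage, dif_neg hm]; exact hx

lemma subset_stage {T : Type*} {m : ℕ} {k : Fin m → ℕ}
    (d : ∀ j : Fin m, (Fin (k j) → T) → T) (S : Set T) (n : ℕ) :
    S ⊆ stage d S n := stage_mono d S (Nat.zero_le n)

/-- Induction invariant in the proof of Theorem 2: for every nonempty subset
`I` of the indices with maximal element `j`, there is a combination term with
support exactly `I` all of whose evaluations under assignments taking values in
`S` lie in the stage `S_{j+1}` of Algorithm 2 (the stage right after the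
datamorphism `d j` has been processed). -/
theorem algorithm2_invariant {T : Type*} {m : ℕ} (k : Fin m → ℕ)
    (hk : ∀ j, 1 ≤ k j) (d : ∀ j : Fin m, (Fin (k j) → T) → T) (S : Set T) :
    ∀ (I : Finset (Fin m)) (hI : I.Nonempty), ∃ c : Term k, c.support = I ∧
      ∀ v : ℕ → T, (∀ n, v n ∈ S) → c.eval d v ∈ stage d S ((I.max' hI).val + 1) := by
  intro I
  induction I using Finset.strongInduction with
  | H I ih =>
  intro hI
  set j := I.max' hI with hj
  have hjI : j ∈ I := I.max'_mem hI
  have hne : Nonempty (Fin (k j)) := ⟨⟨0, hk j⟩⟩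
  by_cases hI' : (I.erase j).Nonempty
  · obtain ⟨c', hsupp', heval'⟩ := ih (I.erase j) (I.erase_ssubset hjI) hI'
    set j' := (I.erase j).max' hI' with hj'
    have hj'lt : j' < j := by
      have hmem := (I.erase j).max'_mem hI'
      have : j' ≠ j := Finset.ne_of_mem_erase hmem
      exact lt_of_le_of_ne (I.le_max' _ (Finset.mem_of_mem_erase hmem)) this
    refine ⟨.app j (fun _ => c'), ?_, ?_⟩
    · simp only [Term.support, hsupp']
      have hb : (Finset.univ.biUnion fun _ : Fin (k j) => I.erase j) = I.erase j := by
        ext a; simp [Finset.mem_biUnion]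
      rw [hb]; exact Finset.insert_erase hjI
    · intro v hv
      have hmem : ∀ l : Fin (k j), c'.eval d v ∈ stage d S j.val := fun _ =>
        stage_mono d S (Nat.succ_le_of_lt hj'lt) (heval' v hv)
      show Term.eval d v (.app j (fun _ => c')) ∈ stage d S (j.val + 1)
      unfold stage
      rw [dif_pos j.isLt]
      exact Or.inr ⟨fun l => c'.eval d v, hmem, rfl⟩
  · have hIeq : I = {j} := by
      rw [Finset.not_nonempty_iff_eq_empty] at hI'
      have := Finset.insert_erase hjI
      rw [hI'] at this
      simpa using this.symm
    refine ⟨.app j (fun _ => .var 0), ?_, ?_⟩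
    · simp only [Term.support, hIeq]
      ext a; simp
    · intro v hv
      show Term.eval d v (.app j (fun _ => .var 0)) ∈ stage d S (j.val + 1)
      unfold stage
      rw [dif_pos j.isLt]
      exact Or.inr ⟨fun _ => v 0, fun _ => subset_stage d S _ (hv 0), rfl⟩
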